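/- arXiv:2303.13401 — 2 statements merged into one kernel-verified Lean document; each statement's English description precedes it below -/
import Mathlib

section
/- Let C ⊆ ℝ be a nonempty closed convex set, let g : ℝ → ℝ be a convex function, and let y ∈ ℝ. Suppose u ∈ ℝ minimizes the function z ↦ ½(y − z)² + g(z) over all of ℝ, and suppose v ∈ C minimizes z ↦ (u − z)² over C (i.e., v is the nearest point of C to u). Then v minimizes z ↦ ½(y − z)² + g(z) over C; that is, for every z ∈ C, ½(y − v)² + g(v) ≤ ½(y − z)² + g(z). -/
/-! The nearest point `v` of `C` to `u` lies, for every `z ∈ C`, on the segment `[u, z]`: this is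
the variational inequality `(u - v) (z - v) ≤ 0` of the projection, read on the line. The objective
`F z = ½(y - z)² + g z` is convex, so on that segment it is at most `max (F u) (F z) = F z`, because
`u` minimizes `F` on all of `ℝ`. -/

open Set

theorem real_inner_sub_sub_nonpos_of_forall_norm_sub_le {F : Type*} [NormedAddCommGroup F]
    [InnerProductSpace ℝ F] {K : Set F} (hK : Convex ℝ K) {u v : F} (hv : v ∈ K)
    (hmin : ∀ w ∈ K, ‖u - v‖ ≤ ‖u - w‖) : ∀ w ∈ K, inner ℝ (u - v) (w - v) ≤ 0 := by
  refine (norm_eq_iInf_iff_real_inner_le_zero hK hv).1 (le_antisymm ?_ ?_)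
  · have : Nonempty K := ⟨⟨v, hv⟩⟩
    exact le_ciInf fun w => hmin w w.2
  · exact ciInf_le ⟨0, forall_mem_range.2 fun _ => norm_nonneg _⟩ (⟨v, hv⟩ : K)

theorem mem_segment_of_forall_sq_sub_le {C : Set ℝ} (hC : Convex ℝ C) {u v z : ℝ} (hv : v ∈ C)
    (hmin : ∀ w ∈ C, (u - v) ^ 2 ≤ (u - w) ^ 2) (hz : z ∈ C) : v ∈ segment ℝ u z := by
  have hinner : (u - v) * (z - v) ≤ 0 := by
    have := real_inner_sub_sub_nonpos_of_forall_norm_sub_le hC hv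
      (fun w hw => by simpa only [Real.norm_eq_abs, ← sq_le_sq] using hmin w hw) z hz
    rwa [Real.inner_apply] at this
  rw [segment_eq_uIcc, mem_uIcc]
  rcases mul_nonpos_iff.1 hinner with ⟨h₁, h₂⟩ | ⟨h₁, h₂⟩
  · exact Or.inr ⟨by linarith, by linarith⟩
  · exact Or.inl ⟨by linarith, by linarith⟩

theorem convexOn_sub_sq_div_two (y : ℝ) : ConvexOn ℝ univ fun z : ℝ => (y - z) ^ 2 / 2 := by
  have := ((Even.convexOn_pow (𝕜 := ℝ) even_two).comp_affineMap
    (AffineMap.const ℝ ℝ y - AffineMap.id ℝ ℝ)).smul (inv_nonneg.2 zero_le_two : (0 : ℝ) ≤ 2⁻¹)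
  simpa [div_eq_inv_mul] using this

theorem prox_decomposition_one_dim_general (C : Set ℝ)
    (hCco : Convex ℝ C) (g : ℝ → ℝ) (hg : ConvexOn ℝ Set.univ g) (y u v : ℝ)
    (hu : ∀ z : ℝ, (y - u) ^ 2 / 2 + g u ≤ (y - z) ^ 2 / 2 + g z)
    (hvC : v ∈ C) (hv : ∀ z ∈ C, (u - v) ^ 2 ≤ (u - z) ^ 2) :
    ∀ z ∈ C, (y - v) ^ 2 / 2 + g v ≤ (y - z) ^ 2 / 2 + g z := by
  intro z hz
  have hF : ConvexOn ℝ univ fun z => (y - z) ^ 2 / 2 + g z := (convexOn_sub_sq_div_two y).add hg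
  have hseg : v ∈ segment ℝ u z := mem_segment_of_forall_sq_sub_le hCco hvC hv hz
  exact (hF.le_on_segment trivial trivial hseg).trans (max_le (hu z) le_rfl)

/-- one-dimensional prox decomposition: if `u` minimizes
`z ↦ ½(y - z)² + g z` over `ℝ` (with `g` convex) and `v ∈ C` is a nearest
point of the nonempty closed convex set `C ⊆ ℝ` to `u`, then `v` minimizes
`z ↦ ½(y - z)² + g z` over `C`. -/
theorem prox_decomposition_one_dim (C : Set ℝ) (hCne : C.Nonempty) (hCcl : IsClosed C)
    (hCco : Convex ℝ C) (g : ℝ → ℝ) (hg : ConvexOn ℝ Set.univ g) (y u v : ℝ)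
    (hu : ∀ z : ℝ, (y - u) ^ 2 / 2 + g u ≤ (y - z) ^ 2 / 2 + g z)
    (hvC : v ∈ C) (hv : ∀ z ∈ C, (u - v) ^ 2 ≤ (u - z) ^ 2) :
    ∀ z ∈ C, (y - v) ^ 2 / 2 + g v ≤ (y - z) ^ 2 / 2 + g z :=
  prox_decomposition_one_dim_general C hCco g hg y u v hu hvC hv
end

section
/- There exist x ∈ ℝ² with x_1, x_2 ∈ [0,1], ε > 0, and w ∈ ℝ² such that neither sequential projection yields the true Euclidean projection of w onto Δ = {δ ∈ ℝ² : ‖δ‖_2 ≤ ε and x + δ ∈ [0,1]²}: there are points δ, δ' ∈ Δ with ‖w − δ‖_2 < ‖w − P_2(P_box(w))‖_2 and ‖w − δ'‖_2 < ‖w − P_box(P_2(w))‖_2. -/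
/-- Coordinatewise box projector onto `{δ : x + δ ∈ [0,1]ⁿ}`. -/
def Pbox (n : ℕ) (x : Fin n → ℝ) (y : Fin n → ℝ) : Fin n → ℝ :=
  fun i => max (-x i) (min (y i) (1 - x i))

/-- Euclidean norm on `Fin n → ℝ`. -/
noncomputable def l2norm (n : ℕ) (z : Fin n → ℝ) : ℝ :=
  Real.sqrt (∑ i, (z i) ^ 2)

/-- Radial projector onto the `ℓ2` ball of radius `ε`. -/
noncomputable def P2 (n : ℕ) (ε : ℝ) (y : Fin n → ℝ) : Fin n → ℝ :=
  if l2norm n y ≤ ε then y else fun i => (ε / l2norm n y) * y i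

/-!
Take `x = (0, 2/5)`, `ε = 1`, `w = (1, 2)`. The point `(4/5, 3/5)`, where the unit circle meets the
face `δ₂ = 3/5` of the box, lies in `Δ` at squared distance `2` from `w`. Clipping `w` to the box
gives `(1, 3/5)`, outside the ball, and shrinking it radially lands at squared distance
`6 - 22/√34 > 2`. Shrinking `w` first gives `(1, 2)/√5`, and clipping that gives `(1/√5, 3/5)`,
at squared distance `(1 - 1/√5)² + 49/25 > 2`.
-/

open Set

lemma l2norm_sq (n : ℕ) (z : Fin n → ℝ) : l2norm n z ^ 2 = ∑ i, z i ^ 2 :=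
  Real.sq_sqrt (Finset.sum_nonneg fun i _ => sq_nonneg (z i))

lemma l2norm_lt_l2norm_iff {n : ℕ} {a b : Fin n → ℝ} :
    l2norm n a < l2norm n b ↔ ∑ i, a i ^ 2 < ∑ i, b i ^ 2 :=
  Real.sqrt_lt_sqrt_iff (Finset.sum_nonneg fun i _ => sq_nonneg (a i))

lemma P2_of_lt_l2norm {n : ℕ} {ε : ℝ} {y : Fin n → ℝ} (h : ε < l2norm n y) :
    P2 n ε y = fun i => ε / l2norm n y * y i :=
  if_neg h.not_ge

lemma Pbox_apply_of_mem {n : ℕ} {x y : Fin n → ℝ} {i : Fin n} (h : x i + y i ∈ Icc 0 1) :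
    Pbox n x y i = y i := by
  rw [Pbox, min_eq_left (by linarith [h.2]), max_eq_right (by linarith [h.1])]

lemma Pbox_apply_of_le {n : ℕ} {x y : Fin n → ℝ} {i : Fin n} (h : 1 - x i ≤ y i) :
    Pbox n x y i = 1 - x i := by
  rw [Pbox, min_eq_right h, max_eq_right (by linarith)]

lemma lt_l2norm_of_sq_lt {n : ℕ} {ε : ℝ} {z : Fin n → ℝ} (h : ε ^ 2 < ∑ i, z i ^ 2) :
    ε < l2norm n z :=
  Real.lt_sqrt_of_sq_lt h

lemma Pbox_counterexample : Pbox 2 ![0, 2/5] ![1, 2] = ![1, 3/5] := by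
  funext i
  fin_cases i
  · exact Pbox_apply_of_mem (by norm_num)
  · exact (Pbox_apply_of_le (by norm_num)).trans (by norm_num)

lemma two_lt_sum_sq_sub_P2_Pbox_counterexample :
    2 < ∑ i, (![1, 2] i - P2 2 1 (Pbox 2 ![0, 2/5] ![1, 2]) i) ^ 2 := by
  have hnorm : 1 < l2norm 2 ![1, 3/5] :=
    lt_l2norm_of_sq_lt (by norm_num [Fin.sum_univ_two])
  rw [Pbox_counterexample, P2_of_lt_l2norm hnorm]
  set c := 1 / l2norm 2 ![1, 3/5]
  have hc : 0 < c := by positivity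
  have hc_sq : c ^ 2 = 25 / 34 := by
    rw [div_pow, l2norm_sq]; norm_num [Fin.sum_univ_two]
  simp only [Fin.sum_univ_two, Matrix.cons_val_zero, Matrix.cons_val_one]
  nlinarith

lemma two_lt_sum_sq_sub_Pbox_P2_counterexample :
    2 < ∑ i, (![1, 2] i - Pbox 2 ![0, 2/5] (P2 2 1 ![1, 2]) i) ^ 2 := by
  have hnorm : 1 < l2norm 2 ![1, 2] :=
    lt_l2norm_of_sq_lt (by norm_num [Fin.sum_univ_two])
  rw [P2_of_lt_l2norm hnorm]
  set c := 1 / l2norm 2 ![1, 2]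
  have hc : 0 < c := by positivity
  have hc_sq : c ^ 2 = 1 / 5 := by
    rw [div_pow, l2norm_sq]; norm_num [Fin.sum_univ_two]
  have hc_le : c ≤ 1 := by nlinarith
  have hc_lt : c < 4 / 5 := by nlinarith
  have hbox0 : Pbox 2 ![0, 2/5] (fun i => c * ![1, 2] i) 0 = c :=
    (Pbox_apply_of_mem (by norm_num; constructor <;> linarith)).trans (by simp)
  have hbox1 : Pbox 2 ![0, 2/5] (fun i => c * ![1, 2] i) 1 = 3 / 5 :=
    (Pbox_apply_of_le (by norm_num; nlinarith)).trans (by norm_num)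
  rw [Fin.sum_univ_two, hbox0, hbox1]
  simp only [Matrix.cons_val_zero, Matrix.cons_val_one]
  nlinarith

/-- in dimension 2, neither sequential projection
(`P_2 ∘ P_box` nor `P_box ∘ P_2`) computes the true Euclidean projection onto
`Δ = {δ : ‖δ‖₂ ≤ ε and x + δ ∈ [0,1]²}` in general. -/
theorem seq_proj_l2_box_not_exact :
    ∃ (x : Fin 2 → ℝ) (ε : ℝ) (w : Fin 2 → ℝ),
      (∀ i, x i ∈ Set.Icc (0 : ℝ) 1) ∧ 0 < ε ∧
      (∃ δ : Fin 2 → ℝ, (l2norm 2 δ ≤ ε ∧ ∀ i, x i + δ i ∈ Set.Icc (0 : ℝ) 1) ∧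
        l2norm 2 (fun i => w i - δ i) < l2norm 2 (fun i => w i - P2 2 ε (Pbox 2 x w) i)) ∧
      (∃ δ' : Fin 2 → ℝ, (l2norm 2 δ' ≤ ε ∧ ∀ i, x i + δ' i ∈ Set.Icc (0 : ℝ) 1) ∧
        l2norm 2 (fun i => w i - δ' i) < l2norm 2 (fun i => w i - Pbox 2 x (P2 2 ε w) i)) := by
  have hδ : l2norm 2 ![4/5, 3/5] ≤ 1 ∧ ∀ i, ![0, 2/5] i + ![4/5, 3/5] i ∈ Icc (0 : ℝ) 1 := by
    refine ⟨le_of_eq ?_, fun i => ?_⟩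
    · norm_num [l2norm, Fin.sum_univ_two]
    · fin_cases i <;> norm_num
  have hdist : ∑ i, (![1, 2] i - ![4/5, 3/5] i) ^ 2 = (2 : ℝ) := by
    norm_num [Fin.sum_univ_two]
  refine ⟨![0, 2/5], 1, ![1, 2], fun i => ?_, one_pos, ⟨![4/5, 3/5], hδ, ?_⟩,
    ⟨![4/5, 3/5], hδ, ?_⟩⟩
  · fin_cases i <;> norm_num
  · rw [l2norm_lt_l2norm_iff, hdist]
    exact two_lt_sum_sq_sub_P2_Pbox_counterexample
  · rw [l2norm_lt_l2norm_iff, hdist]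
    exact two_lt_sum_sq_sub_Pbox_P2_counterexample
end
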